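/- Let n ≥ 4 be an even integer, μ > 0, and let p, κ be real numbers satisfying p_0(n+μ) < p < p_Fuj((n+μ-1)/2), 0 < κ ≤ (n+μ-1)p/2 − (n+μ+1)/2, and κ > 2/(p−1) − (n+μ−1)/2, and set q = (n−1)p/2 − (n+1)/2. Assume in addition −1/2 ≤ q ≤ (n−3)/2 and p < p_Fuj(μ) = 1 + 2/μ. Let γ ∈ {0, 1/2}. Then there exists a constant C > 0 (depending only on n, μ, p, κ, γ) such that for all t ≥ 0 and r > 0, J_γ(t,r) := ∫_{τ=0}^{max(t−r,0)} ⟨τ⟩^{-μ(p-1)/2} ⟨t−τ−r⟩^{-q−1/2−γ} ( ∫_{λ=0}^{t−τ−r} ⟨λ⟩^{p/2} φ_κ(τ,λ)^p ((t−τ−r) − λ)^{-1/2} dλ ) dτ ≤ C ⟨t−r⟩^{-κ−γ}. -/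

import Mathlib

open MeasureTheory Real

/-- Japanese bracket `⟨y⟩ = 1 + |y|`. -/
noncomputable def jb (y : ℝ) : ℝ := 1 + |y|

/-- Strauss exponent: positive root of `(N-1)p² - (N+1)p - 2 = 0`. -/
noncomputable def p0 (N : ℝ) : ℝ := (N + 1 + Real.sqrt (N ^ 2 + 10 * N - 7)) / (2 * (N - 1))

/-- Fujita exponent. -/
noncomputable def pFuj (N : ℝ) : ℝ := 1 + 2 / N

/-- The weight function `φ_κ(t,r) = ⟨t+r⟩^{-1/2} ⟨t-r⟩^{-κ}`. -/
noncomputable def phi (κ t r : ℝ) : ℝ := jb (t + r) ^ (-(1 / 2 : ℝ)) * jb (t - r) ^ (-κ)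

open Set intervalIntegral

/-!
Write `s = t - r`, `a = μ(p-1)/2` and `b = q + 1/2 + γ`. The hypotheses on `κ` say that
`a + q - κ ≥ 0` and `κp > 1 - (a + q - κ)`, so `⟨τ - l⟩^(-κp)` may be replaced by `⟨τ - l⟩^(-ρ)`
with `0 ≤ ρ ≤ κp`, `ρ ≠ 1` and `max(1 - ρ, 0) ≤ a + q - κ`. For `τ < s/2` the inner integral
splits at `l = τ`: beyond it `⟨l⟩^(p/2) ⟨τ + l⟩^(-p/2) ≤ 1` and an Abel integral of `⟨·⟩^(-ρ)`
remains; before it `⟨τ + l⟩ ≥ ⟨τ⟩` and `s - τ - l ≥ s - 2τ`. For `τ ≥ s/2` every bracket is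
comparable to its value at an endpoint. What is left are convolutions of brackets,
`∫₀ˢ ⟨v⟩^(-x) ⟨s - v⟩^(-y) dv ≲ ⟨s⟩^(max(1-x, 0) - y) + ⟨s⟩^(max(1-y, 0) - x)` for `x, y ≠ 1`,
and their analogues with the kernel `(s - v)^(-1/2)`; the exponents add up to
`1/2 - a - b + max(1 - ρ, 0) ≤ -κ - γ`.
-/

lemma one_le_jb (y : ℝ) : 1 ≤ jb y :=
  le_add_of_nonneg_right (abs_nonneg y)

lemma jb_pos (y : ℝ) : 0 < jb y :=
  one_pos.trans_le (one_le_jb y)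

lemma jb_of_nonneg {y : ℝ} (hy : 0 ≤ y) : jb y = 1 + y := by
  rw [jb, abs_of_nonneg hy]

@[fun_prop]
lemma Continuous.jb_rpow {f : ℝ → ℝ} (hf : Continuous f) (e : ℝ) :
    Continuous fun x => jb (f x) ^ e :=
  (continuous_const.add hf.abs).rpow_const fun x => Or.inl (jb_pos (f x)).ne'

lemma continuous_jb_rpow (e : ℝ) : Continuous fun y => jb y ^ e :=
  continuous_id.jb_rpow e

lemma jb_rpow_nonneg (y e : ℝ) : 0 ≤ jb y ^ e :=
  (Real.rpow_pos_of_pos (jb_pos y) e).le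

lemma jb_rpow_le_jb_rpow_of_exponent_le {y e f : ℝ} (h : e ≤ f) : jb y ^ e ≤ jb y ^ f :=
  Real.rpow_le_rpow_of_exponent_le (one_le_jb y) h

lemma jb_rpow_mul_jb_rpow (y e f : ℝ) : jb y ^ e * jb y ^ f = jb y ^ (e + f) :=
  (Real.rpow_add (jb_pos y) e f).symm

lemma jb_le_jb_of_le {x y : ℝ} (hx : 0 ≤ x) (hxy : x ≤ y) : jb x ≤ jb y := by
  rw [jb_of_nonneg hx, jb_of_nonneg (hx.trans hxy)]; linarith

lemma jb_rpow_le_jb_rpow_of_le {x y e : ℝ} (hx : 0 ≤ x) (hxy : x ≤ y) (he : 0 ≤ e) :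
    jb x ^ e ≤ jb y ^ e :=
  Real.rpow_le_rpow (jb_pos x).le (jb_le_jb_of_le hx hxy) he

lemma jb_rpow_le_jb_rpow_of_le_of_nonpos {x y e : ℝ} (hx : 0 ≤ x) (hxy : x ≤ y)
    (he : e ≤ 0) : jb y ^ e ≤ jb x ^ e :=
  Real.rpow_le_rpow_of_nonpos (jb_pos x) (jb_le_jb_of_le hx hxy) he

lemma rpow_le_two_rpow_abs_mul_rpow {x y : ℝ} (hx : 0 < x) (hxy : x ≤ 2 * y) (hyx : y ≤ 2 * x)
    (e : ℝ) : x ^ e ≤ 2 ^ |e| * y ^ e := by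
  have hy : 0 < y := by linarith
  rcases le_total 0 e with he | he
  · calc x ^ e ≤ (2 * y) ^ e := Real.rpow_le_rpow hx.le hxy he
      _ = 2 ^ |e| * y ^ e := by rw [abs_of_nonneg he, Real.mul_rpow zero_le_two hy.le]
  · calc x ^ e ≤ (y / 2) ^ e := Real.rpow_le_rpow_of_nonpos (by positivity) (by linarith) he
      _ = 2 ^ |e| * y ^ e := by
        rw [abs_of_nonpos he, Real.div_rpow hy.le zero_le_two, Real.rpow_neg zero_le_two]
        field_simp

lemma jb_rpow_le_of_mem_Icc {s v : ℝ} (hv : v ∈ Icc (s / 2) s) (e : ℝ) :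
    jb v ^ e ≤ 2 ^ |e| * jb s ^ e := by
  have hv0 : 0 ≤ v := by linarith [hv.1, hv.2]
  apply rpow_le_two_rpow_abs_mul_rpow (jb_pos v) <;>
    rw [jb_of_nonneg hv0, jb_of_nonneg (hv0.trans hv.2)] <;> linarith [hv.1, hv.2]

lemma one_le_two_rpow_abs_mul_jb_rpow {y : ℝ} (hy : jb y ≤ 2) (e : ℝ) :
    1 ≤ 2 ^ |e| * jb y ^ e := by
  simpa using rpow_le_two_rpow_abs_mul_rpow one_pos (by linarith [one_le_jb y]) (by linarith) e

lemma jb_rpow_le_two_rpow_abs {y : ℝ} (hy : jb y ≤ 2) (e : ℝ) : jb y ^ e ≤ 2 ^ |e| := by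
  simpa using rpow_le_two_rpow_abs_mul_rpow (y := 1) (jb_pos y) (by linarith)
    (by linarith [one_le_jb y]) e

-- The left bound is not asked for at `m`: where it is used, it is `0 ^ (-1/2) = 0` there.
lemma integral_le_add_of_le_on_Ioo_of_le_on_Ioc {f g₁ g₂ : ℝ → ℝ} {a m b : ℝ}
    (ham : a ≤ m) (hmb : m ≤ b) (hf : ∀ x ∈ Ioc a b, 0 ≤ f x)
    (hg₁ : IntervalIntegrable g₁ volume a m) (hg₂ : IntervalIntegrable g₂ volume m b)
    (h₁ : ∀ x ∈ Ioo a m, f x ≤ g₁ x) (h₂ : ∀ x ∈ Ioc m b, f x ≤ g₂ x) :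
    ∫ x in a..b, f x ≤ (∫ x in a..m, g₁ x) + ∫ x in m..b, g₂ x := by
  let H x := if x ≤ m then g₁ x else g₂ x
  have hH₁ : EqOn g₁ H (uIoc a m) := fun x hx => by
    rw [uIoc_of_le ham] at hx; simp [H, hx.2]
  have hH₂ : EqOn g₂ H (uIoc m b) := fun x hx => by
    rw [uIoc_of_le hmb] at hx; simp [H, not_le.2 hx.1]
  have hHi₁ := hg₁.congr hH₁
  have hHi₂ := hg₂.congr hH₂
  calc ∫ x in a..b, f x ≤ ∫ x in a..b, H x := by
        rw [integral_of_le (ham.trans hmb), integral_of_le (ham.trans hmb)]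
        refine integral_mono_of_nonneg ?_ ((hHi₁.trans hHi₂).1) ?_
        · filter_upwards [ae_restrict_mem measurableSet_Ioc] with x hx using hf x hx
        · filter_upwards [ae_restrict_mem measurableSet_Ioc,
            ae_restrict_of_ae (Measure.ae_ne volume m)] with x hx hxm
          rcases lt_or_gt_of_ne hxm with hlt | hgt
          · simpa [H, hlt.le] using h₁ x ⟨hx.1, hlt⟩
          · simpa [H, not_le.2 hgt] using h₂ x ⟨hgt, hx.2⟩
    _ = (∫ x in a..m, g₁ x) + ∫ x in m..b, g₂ x := by
        rw [← integral_add_adjacent_intervals hHi₁ hHi₂,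
          integral_congr_ae (Filter.Eventually.of_forall fun x hx => (hH₁ hx).symm),
          integral_congr_ae (Filter.Eventually.of_forall fun x hx => (hH₂ hx).symm)]

lemma integral_jb_rpow_neg_le {β m : ℝ} (hβ : β ≠ 1) (hm : 0 ≤ m) :
    ∫ u in (0 : ℝ)..m, jb u ^ (-β) ≤ jb m ^ max (1 - β) 0 / |1 - β| := by
  have hint : ∫ u in (0 : ℝ)..m, jb u ^ (-β) = ((1 + m) ^ (1 - β) - 1) / (1 - β) := by
    have hshift : EqOn (fun u => jb u ^ (-β)) (fun u => (u + 1) ^ (-β)) (uIcc 0 m) := by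
      intro u hu
      rw [uIcc_of_le hm] at hu
      simp only [jb_of_nonneg hu.1, add_comm]
    rw [integral_congr hshift, integral_comp_add_right (fun x => x ^ (-β)),
      integral_rpow (Or.inr ⟨fun h => hβ (by linarith), by
        rw [uIcc_of_le (by linarith)]; intro h; linarith [h.1]⟩)]
    simp only [zero_add, Real.one_rpow, add_comm m 1, show -β + 1 = 1 - β by ring]
  have hpos : 0 < (1 + m) ^ (1 - β) := Real.rpow_pos_of_pos (by linarith) _
  rw [hint, jb_of_nonneg hm]
  rcases lt_or_gt_of_ne hβ with hlt | hgt
  · rw [max_eq_left (by linarith), abs_of_pos (by linarith)]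
    gcongr; linarith
  · rw [max_eq_right (by linarith), abs_of_neg (by linarith), Real.rpow_zero,
      ← neg_div_neg_eq, neg_sub]
    exact div_le_div_of_nonneg_right (by linarith) (by linarith)

lemma integral_jb_conv_half_le {x y s : ℝ} (hx : x ≠ 1) (hs : 0 ≤ s) :
    ∫ v in (0 : ℝ)..s / 2, jb v ^ (-x) * jb (s - v) ^ (-y) ≤
      2 ^ |y| / |1 - x| * jb s ^ (max (1 - x) 0 - y) := by
  have hs2 : 0 ≤ s / 2 := by linarith
  calc ∫ v in (0 : ℝ)..s / 2, jb v ^ (-x) * jb (s - v) ^ (-y)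
      ≤ ∫ v in (0 : ℝ)..s / 2, jb v ^ (-x) * (2 ^ |y| * jb s ^ (-y)) := by
        refine integral_mono_on hs2 (Continuous.intervalIntegrable (by fun_prop) _ _)
          (Continuous.intervalIntegrable (by fun_prop) _ _) fun v hv => ?_
        gcongr
        · exact jb_rpow_nonneg _ _
        · simpa using jb_rpow_le_of_mem_Icc (s := s) (v := s - v)
            ⟨by linarith [hv.2], by linarith [hv.1]⟩ (-y)
    _ = (∫ v in (0 : ℝ)..s / 2, jb v ^ (-x)) * (2 ^ |y| * jb s ^ (-y)) := integral_mul_const _ _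
    _ ≤ jb s ^ max (1 - x) 0 / |1 - x| * (2 ^ |y| * jb s ^ (-y)) := by
        gcongr
        · exact mul_nonneg (by positivity) (jb_rpow_nonneg _ _)
        · exact (integral_jb_rpow_neg_le hx hs2).trans (div_le_div_of_nonneg_right
            (jb_rpow_le_jb_rpow_of_le hs2 (by linarith) (le_max_right _ _)) (abs_nonneg _))
    _ = 2 ^ |y| / |1 - x| * jb s ^ (max (1 - x) 0 - y) := by
        rw [show max (1 - x) 0 - y = max (1 - x) 0 + -y by ring, ← jb_rpow_mul_jb_rpow]; ring

lemma exists_integral_jb_conv_le {x y E : ℝ} (hx : x ≠ 1) (hy : y ≠ 1)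
    (hxE : max (1 - x) 0 - y ≤ E) (hyE : max (1 - y) 0 - x ≤ E) :
    ∃ C > 0, ∀ s, 0 ≤ s →
      ∫ v in (0 : ℝ)..s, jb v ^ (-x) * jb (s - v) ^ (-y) ≤ C * jb s ^ E := by
  refine ⟨2 ^ |y| / |1 - x| + 2 ^ |x| / |1 - y|, by
    have := sub_ne_zero.2 hx.symm; positivity, fun s hs => ?_⟩
  have hint : ∀ a b, IntervalIntegrable (fun v => jb v ^ (-x) * jb (s - v) ^ (-y)) volume a b :=
    fun a b => Continuous.intervalIntegrable (by fun_prop) a b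
  have hflip : ∫ v in s / 2..s, jb v ^ (-x) * jb (s - v) ^ (-y) =
      ∫ w in (0 : ℝ)..s / 2, jb w ^ (-y) * jb (s - w) ^ (-x) := by
    have h := integral_comp_sub_left (fun w => jb w ^ (-y) * jb (s - w) ^ (-x)) s
      (a := s / 2) (b := s)
    rw [sub_self, show s - s / 2 = s / 2 by ring] at h
    simpa only [sub_sub_cancel, mul_comm] using h
  rw [← integral_add_adjacent_intervals (hint 0 (s / 2)) (hint (s / 2) s), hflip, add_mul]
  gcongr
  · exact (integral_jb_conv_half_le hx hs).trans
      (mul_le_mul_of_nonneg_left (jb_rpow_le_jb_rpow_of_exponent_le hxE) (by positivity))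
  · exact (integral_jb_conv_half_le hy hs).trans
      (mul_le_mul_of_nonneg_left (jb_rpow_le_jb_rpow_of_exponent_le hyE) (by positivity))

noncomputable def abelIntegral (F : ℝ → ℝ) (T : ℝ) : ℝ :=
  ∫ l in (0 : ℝ)..T, F l * (T - l) ^ (-(1 / 2 : ℝ))

lemma abelIntegral_nonneg {F : ℝ → ℝ} {T : ℝ} (hT : 0 ≤ T)
    (hF : ∀ l ∈ Icc 0 T, 0 ≤ F l) : 0 ≤ abelIntegral F T :=
  integral_nonneg hT fun l hl => mul_nonneg (hF l hl) (Real.rpow_nonneg (by linarith [hl.2]) _)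

lemma intervalIntegrable_mul_sub_rpow_neg_half {F : ℝ → ℝ} (hF : Continuous F) (T a b : ℝ) :
    IntervalIntegrable (fun l => F l * (T - l) ^ (-(1 / 2 : ℝ))) volume a b := by
  have h := (intervalIntegrable_rpow' (a := T - b) (b := T - a) (r := -(1 / 2 : ℝ))
    (by norm_num)).comp_sub_left T
  simp only [sub_sub_cancel] at h
  exact h.symm.continuousOn_mul hF.continuousOn

lemma intervalIntegrable_mul_sub_two_mul_rpow_neg_half {F : ℝ → ℝ} (hF : Continuous F)
    (s a b : ℝ) :
    IntervalIntegrable (fun τ => F τ * (s - 2 * τ) ^ (-(1 / 2 : ℝ))) volume a b := by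
  have h := (intervalIntegrable_mul_sub_rpow_neg_half (F := fun _ => 1) continuous_const s
    (2 * a) (2 * b)).comp_mul_left (c := (2 : ℝ))
  simp only [one_mul, mul_div_cancel_left₀ _ (two_ne_zero' ℝ)] at h
  exact h.continuousOn_mul hF.continuousOn

lemma integral_mul_sub_rpow_neg_half_le {F : ℝ → ℝ} {c T M : ℝ} (hcT : c ≤ T)
    (hF : Continuous F) (hFM : ∀ l ∈ Icc c T, F l ≤ M) :
    ∫ l in c..T, F l * (T - l) ^ (-(1 / 2 : ℝ)) ≤ 2 * M * (T - c) ^ (1 / 2 : ℝ) := by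
  calc ∫ l in c..T, F l * (T - l) ^ (-(1 / 2 : ℝ))
      ≤ ∫ l in c..T, M * (T - l) ^ (-(1 / 2 : ℝ)) :=
        integral_mono_on hcT (intervalIntegrable_mul_sub_rpow_neg_half hF T c T)
          (intervalIntegrable_mul_sub_rpow_neg_half continuous_const T c T) fun l hl =>
          mul_le_mul_of_nonneg_right (hFM l hl) (Real.rpow_nonneg (by linarith [hl.2]) _)
    _ = 2 * M * (T - c) ^ (1 / 2 : ℝ) := by
        rw [intervalIntegral.integral_const_mul,
          integral_comp_sub_left (fun x => x ^ (-(1 / 2 : ℝ))), sub_self,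
          integral_rpow (Or.inl (by norm_num)), Real.zero_rpow (by norm_num)]
        norm_num
        ring

lemma sub_rpow_neg_half_le_two_mul_jb_rpow {d u : ℝ} (hd : 1 ≤ d) (hu : u ≤ d / 2) :
    (d - u) ^ (-(1 / 2 : ℝ)) ≤ 2 * jb d ^ (-(1 / 2 : ℝ)) := by
  have h4 : (4 : ℝ) ^ (1 / 2 : ℝ) = 2 := by
    rw [show (4 : ℝ) = 2 ^ (2 : ℝ) by norm_num, ← Real.rpow_mul zero_le_two]; norm_num
  calc (d - u) ^ (-(1 / 2 : ℝ)) ≤ (jb d / 4) ^ (-(1 / 2 : ℝ)) :=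
        Real.rpow_le_rpow_of_nonpos (by linarith [jb_pos d])
          (by rw [jb_of_nonneg (by linarith)]; linarith) (by norm_num)
    _ = 2 * jb d ^ (-(1 / 2 : ℝ)) := by
        rw [Real.div_rpow (jb_pos d).le (by norm_num),
          Real.rpow_neg (by norm_num : (0 : ℝ) ≤ 4), h4]
        ring

lemma abelIntegral_jb_rpow_le_of_one_le {β d : ℝ} (hβ : β ≠ 1) (hd : 1 ≤ d) :
    abelIntegral (fun u => jb u ^ (-β)) d ≤
      (2 / |1 - β| + 2 * 2 ^ |β|) * jb d ^ (max (1 - β) 0 - 1 / 2) := by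
  have hd2 : 0 ≤ d / 2 := by linarith
  have hint := intervalIntegrable_mul_sub_rpow_neg_half (continuous_jb_rpow (-β)) d
  have hω : jb d ^ (1 / 2 - β) ≤ jb d ^ (max (1 - β) 0 - 1 / 2) :=
    jb_rpow_le_jb_rpow_of_exponent_le (by linarith [le_max_left (1 - β) 0])
  have hnear : ∫ u in (0 : ℝ)..d / 2, jb u ^ (-β) * (d - u) ^ (-(1 / 2 : ℝ)) ≤
      2 / |1 - β| * jb d ^ (max (1 - β) 0 - 1 / 2) :=
    calc ∫ u in (0 : ℝ)..d / 2, jb u ^ (-β) * (d - u) ^ (-(1 / 2 : ℝ))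
        ≤ ∫ u in (0 : ℝ)..d / 2, jb u ^ (-β) * (2 * jb d ^ (-(1 / 2 : ℝ))) :=
          integral_mono_on hd2 (hint _ _) (Continuous.intervalIntegrable (by fun_prop) _ _)
            fun u hu => mul_le_mul_of_nonneg_left
              (sub_rpow_neg_half_le_two_mul_jb_rpow hd hu.2) (jb_rpow_nonneg _ _)
      _ = (∫ u in (0 : ℝ)..d / 2, jb u ^ (-β)) * (2 * jb d ^ (-(1 / 2 : ℝ))) :=
          integral_mul_const _ _
      _ ≤ jb d ^ max (1 - β) 0 / |1 - β| * (2 * jb d ^ (-(1 / 2 : ℝ))) := by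
          refine mul_le_mul_of_nonneg_right ((integral_jb_rpow_neg_le hβ hd2).trans ?_)
            (mul_nonneg zero_le_two (jb_rpow_nonneg _ _))
          exact div_le_div_of_nonneg_right
            (jb_rpow_le_jb_rpow_of_le hd2 (by linarith) (le_max_right _ _))
            (abs_nonneg _)
      _ = 2 / |1 - β| * jb d ^ (max (1 - β) 0 - 1 / 2) := by
          rw [sub_eq_add_neg _ (1 / 2 : ℝ), ← jb_rpow_mul_jb_rpow]; ring
  have hfar : ∫ u in d / 2..d, jb u ^ (-β) * (d - u) ^ (-(1 / 2 : ℝ)) ≤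
      2 * 2 ^ |β| * jb d ^ (max (1 - β) 0 - 1 / 2) :=
    calc ∫ u in d / 2..d, jb u ^ (-β) * (d - u) ^ (-(1 / 2 : ℝ))
        ≤ 2 * (2 ^ |β| * jb d ^ (-β)) * (d - d / 2) ^ (1 / 2 : ℝ) :=
          integral_mul_sub_rpow_neg_half_le (by linarith) (continuous_jb_rpow (-β))
            fun u hu => by simpa using jb_rpow_le_of_mem_Icc hu (-β)
      _ ≤ 2 * (2 ^ |β| * jb d ^ (-β)) * jb d ^ (1 / 2 : ℝ) := by
          refine mul_le_mul_of_nonneg_left (Real.rpow_le_rpow (by linarith) ?_ (by norm_num))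
            (mul_nonneg zero_le_two (mul_nonneg (by positivity) (jb_rpow_nonneg _ _)))
          rw [jb_of_nonneg (by linarith)]; linarith
      _ = 2 * 2 ^ |β| * jb d ^ (1 / 2 - β) := by
          rw [mul_assoc, mul_assoc, jb_rpow_mul_jb_rpow, neg_add_eq_sub, mul_assoc]
      _ ≤ 2 * 2 ^ |β| * jb d ^ (max (1 - β) 0 - 1 / 2) :=
          mul_le_mul_of_nonneg_left hω (by positivity)
  rw [abelIntegral, ← integral_add_adjacent_intervals (hint 0 (d / 2)) (hint (d / 2) d), add_mul]
  exact add_le_add hnear hfar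

lemma exists_abelIntegral_jb_rpow_le {β E : ℝ} (hβ : β ≠ 1)
    (hE : max (1 - β) 0 - 1 / 2 ≤ E) :
    ∃ C > 0, ∀ d, 0 ≤ d → abelIntegral (fun u => jb u ^ (-β)) d ≤ C * jb d ^ E := by
  refine ⟨2 * 2 ^ |β| * 2 ^ |E| + (2 / |1 - β| + 2 * 2 ^ |β|), by positivity, fun d hd => ?_⟩
  have hEd := jb_rpow_nonneg d E
  rcases le_or_gt d 1 with hd1 | hd1
  · have hjb : jb d ≤ 2 := by rw [jb_of_nonneg hd]; linarith
    calc abelIntegral (fun u => jb u ^ (-β)) d ≤ 2 * 2 ^ |β| * (d - 0) ^ (1 / 2 : ℝ) :=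
          integral_mul_sub_rpow_neg_half_le hd (continuous_jb_rpow (-β)) fun u hu => by
            simpa using jb_rpow_le_two_rpow_abs
              (by rw [jb_of_nonneg hu.1]; linarith [hu.2] : jb u ≤ 2) (-β)
      _ ≤ 2 * 2 ^ |β| * (2 ^ |E| * jb d ^ E) := by
          rw [sub_zero]
          exact mul_le_mul_of_nonneg_left ((Real.rpow_le_one hd hd1 (by norm_num)).trans
            (one_le_two_rpow_abs_mul_jb_rpow hjb E)) (by positivity)
      _ ≤ _ := by nlinarith [show 0 ≤ 2 / |1 - β| + 2 * 2 ^ |β| by positivity]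
  · calc abelIntegral (fun u => jb u ^ (-β)) d
        ≤ (2 / |1 - β| + 2 * 2 ^ |β|) * jb d ^ (max (1 - β) 0 - 1 / 2) :=
          abelIntegral_jb_rpow_le_of_one_le hβ hd1.le
      _ ≤ (2 / |1 - β| + 2 * 2 ^ |β|) * jb d ^ E :=
          mul_le_mul_of_nonneg_left (jb_rpow_le_jb_rpow_of_exponent_le hE) (by positivity)
      _ ≤ _ := by nlinarith [show (0 : ℝ) ≤ 2 * 2 ^ |β| * 2 ^ |E| by positivity]

lemma integral_jb_rpow_mul_comp_two_mul_le {K : ℝ → ℝ} {x s : ℝ} (hs : 0 ≤ s)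
    (hK : IntervalIntegrable K volume 0 s) (hK0 : ∀ w ∈ Icc 0 s, 0 ≤ K w) :
    ∫ τ in (0 : ℝ)..s / 2, jb τ ^ (-x) * K (s - 2 * τ) ≤
      2 ^ |x| * ∫ v in (0 : ℝ)..s, jb v ^ (-x) * K (s - v) := by
  have hKs : IntervalIntegrable (fun v => K (s - v)) volume 0 s := by
    simpa using (hK.comp_sub_left s).symm
  have hKs2 : IntervalIntegrable (fun τ => K (s - 2 * τ)) volume 0 (s / 2) := by
    simpa using hKs.comp_mul_left (c := 2)
  have hG := hKs.continuousOn_mul (continuous_jb_rpow (-x)).continuousOn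
  have hG2 : IntervalIntegrable (fun τ => jb (2 * τ) ^ (-x) * K (s - 2 * τ)) volume 0 (s / 2) :=
    by simpa using hG.comp_mul_left (c := 2)
  calc ∫ τ in (0 : ℝ)..s / 2, jb τ ^ (-x) * K (s - 2 * τ)
      ≤ ∫ τ in (0 : ℝ)..s / 2, 2 ^ |x| * (jb (2 * τ) ^ (-x) * K (s - 2 * τ)) := by
        refine integral_mono_on (by linarith)
          (hKs2.continuousOn_mul (continuous_jb_rpow (-x)).continuousOn) (hG2.const_mul _)
          fun τ hτ => ?_
        rw [← mul_assoc]
        refine mul_le_mul_of_nonneg_right ?_ (hK0 _ ⟨by linarith [hτ.2], by linarith [hτ.1]⟩)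
        simpa using jb_rpow_le_of_mem_Icc (s := 2 * τ) ⟨by linarith, by linarith [hτ.1]⟩ (-x)
    _ = 2 ^ |x| * (2⁻¹ * ∫ v in (0 : ℝ)..s, jb v ^ (-x) * K (s - v)) := by
        rw [intervalIntegral.integral_const_mul,
          integral_comp_mul_left (fun v => jb v ^ (-x) * K (s - v)) two_ne_zero]
        simp [mul_div_cancel₀]
    _ ≤ 2 ^ |x| * ∫ v in (0 : ℝ)..s, jb v ^ (-x) * K (s - v) := by
        have : 0 ≤ ∫ v in (0 : ℝ)..s, jb v ^ (-x) * K (s - v) :=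
          integral_nonneg hs fun v hv => mul_nonneg (jb_rpow_nonneg _ _)
            (hK0 _ ⟨by linarith [hv.2], by linarith [hv.1]⟩)
        gcongr
        linarith

lemma exists_integral_jb_mul_jb_sub_two_mul_le {x y E : ℝ} (hx : x ≠ 1) (hy : y ≠ 1)
    (hxE : max (1 - x) 0 - y ≤ E) (hyE : max (1 - y) 0 - x ≤ E) :
    ∃ C > 0, ∀ s, 0 ≤ s →
      ∫ τ in (0 : ℝ)..s / 2, jb τ ^ (-x) * jb (s - 2 * τ) ^ (-y) ≤ C * jb s ^ E := by
  obtain ⟨C, hC, hconv⟩ := exists_integral_jb_conv_le hx hy hxE hyE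
  refine ⟨2 ^ |x| * C, by positivity, fun s hs => ?_⟩
  calc ∫ τ in (0 : ℝ)..s / 2, jb τ ^ (-x) * jb (s - 2 * τ) ^ (-y)
      ≤ 2 ^ |x| * ∫ v in (0 : ℝ)..s, jb v ^ (-x) * jb (s - v) ^ (-y) :=
        integral_jb_rpow_mul_comp_two_mul_le hs ((continuous_jb_rpow _).intervalIntegrable _ _)
          fun w _ => jb_rpow_nonneg w (-y)
    _ ≤ 2 ^ |x| * C * jb s ^ E := by
        rw [mul_assoc]; exact mul_le_mul_of_nonneg_left (hconv s hs) (by positivity)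

lemma exists_integral_jb_mul_sub_two_mul_rpow_le {β E : ℝ} (hβ : β ≠ 1)
    (hE : max (1 - β) 0 - 1 / 2 ≤ E) :
    ∃ C > 0, ∀ s, 0 ≤ s →
      ∫ τ in (0 : ℝ)..s / 2, jb τ ^ (-β) * (s - 2 * τ) ^ (-(1 / 2 : ℝ)) ≤
        C * jb s ^ E := by
  obtain ⟨C, hC, habel⟩ := exists_abelIntegral_jb_rpow_le hβ hE
  refine ⟨2 ^ |β| * C, by positivity, fun s hs => ?_⟩
  calc ∫ τ in (0 : ℝ)..s / 2, jb τ ^ (-β) * (s - 2 * τ) ^ (-(1 / 2 : ℝ))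
      ≤ 2 ^ |β| * abelIntegral (fun u => jb u ^ (-β)) s :=
        integral_jb_rpow_mul_comp_two_mul_le (K := fun w => w ^ (-(1 / 2 : ℝ))) hs
          (intervalIntegrable_rpow' (by norm_num)) fun w hw => Real.rpow_nonneg hw.1 _
    _ ≤ 2 ^ |β| * C * jb s ^ E := by
        rw [mul_assoc]; exact mul_le_mul_of_nonneg_left (habel s hs) (by positivity)

lemma phi_rpow (κ τ l p : ℝ) :
    phi κ τ l ^ p = jb (τ + l) ^ (-(p / 2)) * jb (τ - l) ^ (-(κ * p)) := by
  rw [phi, Real.mul_rpow (jb_rpow_nonneg _ _) (jb_rpow_nonneg _ _),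
    ← Real.rpow_mul (jb_pos _).le, ← Real.rpow_mul (jb_pos _).le]
  ring_nf

lemma continuous_jb_rpow_mul_phi_rpow (p κ τ : ℝ) :
    Continuous fun l => jb l ^ (p / 2) * phi κ τ l ^ p := by
  simp only [phi_rpow]; fun_prop

lemma jb_rpow_mul_phi_rpow_nonneg (p κ τ l : ℝ) : 0 ≤ jb l ^ (p / 2) * phi κ τ l ^ p := by
  rw [phi_rpow]
  exact mul_nonneg (jb_rpow_nonneg _ _) (mul_nonneg (jb_rpow_nonneg _ _) (jb_rpow_nonneg _ _))

section Regions

variable {p κ ρ τ T : ℝ}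

lemma integral_phi_le_abelIntegral (hp : 0 ≤ p) (hρ : ρ ≤ κ * p) (hτ : 0 ≤ τ)
    (hτT : τ ≤ T) :
    ∫ l in τ..T, jb l ^ (p / 2) * phi κ τ l ^ p * (T - l) ^ (-(1 / 2 : ℝ)) ≤
      abelIntegral (fun u => jb u ^ (-ρ)) (T - τ) := by
  have hshift := integral_comp_sub_right
    (fun u => jb u ^ (-ρ) * (T - τ - u) ^ (-(1 / 2 : ℝ))) τ (a := τ) (b := T)
  simp only [sub_self, sub_sub_sub_cancel_right] at hshift
  rw [abelIntegral, ← hshift]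
  refine integral_mono_on hτT
    (intervalIntegrable_mul_sub_rpow_neg_half (continuous_jb_rpow_mul_phi_rpow p κ τ) T τ T)
    (intervalIntegrable_mul_sub_rpow_neg_half (by fun_prop) T τ T) fun l hl => ?_
  refine mul_le_mul_of_nonneg_right ?_ (Real.rpow_nonneg (by linarith [hl.2]) _)
  have hl0 : 0 ≤ l := hτ.trans hl.1
  have hcancel : jb l ^ (p / 2) * jb (τ + l) ^ (-(p / 2)) ≤ 1 :=
    calc jb l ^ (p / 2) * jb (τ + l) ^ (-(p / 2))
        ≤ jb (τ + l) ^ (p / 2) * jb (τ + l) ^ (-(p / 2)) :=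
          mul_le_mul_of_nonneg_right (jb_rpow_le_jb_rpow_of_le hl0 (by linarith) (by linarith))
            (jb_rpow_nonneg _ _)
      _ = 1 := by rw [jb_rpow_mul_jb_rpow, add_neg_cancel, Real.rpow_zero]
  have hdecay : jb (τ - l) ^ (-(κ * p)) ≤ jb (l - τ) ^ (-ρ) := by
    rw [jb, abs_sub_comm, ← jb]; exact jb_rpow_le_jb_rpow_of_exponent_le (by linarith)
  rw [phi_rpow, ← mul_assoc]
  simpa using mul_le_mul hcancel hdecay (jb_rpow_nonneg _ _) zero_le_one

lemma integral_phi_le_of_lt (hp : 0 ≤ p) (hρ : ρ ≤ κ * p) (hτ : 0 ≤ τ) (hτT : τ < T) :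
    ∫ l in (0 : ℝ)..τ, jb l ^ (p / 2) * phi κ τ l ^ p * (T - l) ^ (-(1 / 2 : ℝ)) ≤
      jb τ ^ (-(p / 2)) * (T - τ) ^ (-(1 / 2 : ℝ)) *
        ∫ l in (0 : ℝ)..τ, jb l ^ (p / 2) * jb (τ - l) ^ (-ρ) := by
  rw [← intervalIntegral.integral_const_mul]
  refine integral_mono_on hτ
    (intervalIntegrable_mul_sub_rpow_neg_half (continuous_jb_rpow_mul_phi_rpow p κ τ) T 0 τ)
    (Continuous.intervalIntegrable (by fun_prop) _ _) fun l hl => ?_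
  have h₁ : jb (τ + l) ^ (-(p / 2)) ≤ jb τ ^ (-(p / 2)) :=
    jb_rpow_le_jb_rpow_of_le_of_nonpos hτ (by linarith [hl.1]) (by linarith)
  have h₂ : jb (τ - l) ^ (-(κ * p)) ≤ jb (τ - l) ^ (-ρ) :=
    jb_rpow_le_jb_rpow_of_exponent_le (by linarith)
  have h₃ : (T - l) ^ (-(1 / 2 : ℝ)) ≤ (T - τ) ^ (-(1 / 2 : ℝ)) :=
    Real.rpow_le_rpow_of_nonpos (by linarith) (by linarith [hl.2]) (by norm_num)
  rw [phi_rpow]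
  calc jb l ^ (p / 2) * (jb (τ + l) ^ (-(p / 2)) * jb (τ - l) ^ (-(κ * p))) *
        (T - l) ^ (-(1 / 2 : ℝ))
      = jb (τ + l) ^ (-(p / 2)) * (T - l) ^ (-(1 / 2 : ℝ)) *
          (jb l ^ (p / 2) * jb (τ - l) ^ (-(κ * p))) := by ring
    _ ≤ jb τ ^ (-(p / 2)) * (T - τ) ^ (-(1 / 2 : ℝ)) *
          (jb l ^ (p / 2) * jb (τ - l) ^ (-ρ)) :=
        mul_le_mul
          (mul_le_mul h₁ h₃ (Real.rpow_nonneg (by linarith [hl.2]) _) (jb_rpow_nonneg _ _))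
          (mul_le_mul_of_nonneg_left h₂ (jb_rpow_nonneg _ _))
          (mul_nonneg (jb_rpow_nonneg _ _) (jb_rpow_nonneg _ _))
          (mul_nonneg (jb_rpow_nonneg _ _) (Real.rpow_nonneg (by linarith) _))

lemma abelIntegral_phi_le_of_le (hp : 0 ≤ p) (hρ0 : 0 ≤ ρ) (hρ : ρ ≤ κ * p)
    (hT : 0 ≤ T) (hTτ : T ≤ τ) :
    abelIntegral (fun l => jb l ^ (p / 2) * phi κ τ l ^ p) T ≤
      2 * 2 ^ |p / 2| * jb (τ + T) ^ (-(p / 2)) * jb (τ - T) ^ (-ρ) * jb T ^ ((p + 1) / 2) := by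
  set M := jb T ^ (p / 2) * (2 ^ |p / 2| * jb (τ + T) ^ (-(p / 2)) * jb (τ - T) ^ (-ρ))
  have hM : 0 ≤ M :=
    mul_nonneg (jb_rpow_nonneg _ _) (mul_nonneg (mul_nonneg (by positivity) (jb_rpow_nonneg _ _))
      (jb_rpow_nonneg _ _))
  have hbound : ∀ l ∈ Icc 0 T, jb l ^ (p / 2) * phi κ τ l ^ p ≤ M := fun l hl => by
    have h₁ : jb l ^ (p / 2) ≤ jb T ^ (p / 2) :=
      jb_rpow_le_jb_rpow_of_le hl.1 hl.2 (by linarith)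
    have h₂ : jb (τ + l) ^ (-(p / 2)) ≤ 2 ^ |p / 2| * jb (τ + T) ^ (-(p / 2)) := by
      simpa using jb_rpow_le_of_mem_Icc (s := τ + T) ⟨by linarith [hl.1], by linarith [hl.2]⟩
        (-(p / 2))
    have h₃ : jb (τ - l) ^ (-(κ * p)) ≤ jb (τ - T) ^ (-ρ) :=
      (jb_rpow_le_jb_rpow_of_exponent_le (by linarith)).trans
        (jb_rpow_le_jb_rpow_of_le_of_nonpos (by linarith) (by linarith [hl.2]) (by linarith))
    rw [phi_rpow]
    exact mul_le_mul h₁ (mul_le_mul h₂ h₃ (jb_rpow_nonneg _ _)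
      (mul_nonneg (by positivity) (jb_rpow_nonneg _ _)))
      (mul_nonneg (jb_rpow_nonneg _ _) (jb_rpow_nonneg _ _)) (jb_rpow_nonneg _ _)
  calc abelIntegral (fun l => jb l ^ (p / 2) * phi κ τ l ^ p) T
      ≤ 2 * M * (T - 0) ^ (1 / 2 : ℝ) :=
        integral_mul_sub_rpow_neg_half_le hT (continuous_jb_rpow_mul_phi_rpow p κ τ) hbound
    _ ≤ 2 * M * jb T ^ (1 / 2 : ℝ) := by
        rw [sub_zero]
        exact mul_le_mul_of_nonneg_left
          (Real.rpow_le_rpow hT (by rw [jb_of_nonneg hT]; linarith) (by norm_num)) (by positivity)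
    _ = _ := by
        rw [show (p + 1) / 2 = p / 2 + 1 / 2 by ring, ← jb_rpow_mul_jb_rpow]; ring

lemma exists_abelIntegral_phi_le_of_lt (hp : 0 ≤ p) (hρ : ρ ≤ κ * p) (hρ1 : ρ ≠ 1) :
    ∃ C > 0, ∀ τ T, 0 ≤ τ → τ < T →
      abelIntegral (fun l => jb l ^ (p / 2) * phi κ τ l ^ p) T ≤
        C * (jb (T - τ) ^ (max (1 - ρ) 0 - 1 / 2) +
          jb τ ^ max (1 - ρ) 0 * (T - τ) ^ (-(1 / 2 : ℝ))) := by
  obtain ⟨C₁, hC₁, hfar⟩ := exists_abelIntegral_jb_rpow_le hρ1 le_rfl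
  obtain ⟨C₂, hC₂, hnear⟩ := exists_integral_jb_conv_le (x := -(p / 2))
    (E := p / 2 + max (1 - ρ) 0) (by linarith) hρ1
    (by rw [max_eq_left (by linarith)]; linarith [le_max_left (1 - ρ) 0]) (by linarith)
  refine ⟨C₁ + C₂, by positivity, fun τ T hτ hτT => ?_⟩
  have hint := intervalIntegrable_mul_sub_rpow_neg_half (continuous_jb_rpow_mul_phi_rpow p κ τ) T
  have hnear' :
      ∫ l in (0 : ℝ)..τ, jb l ^ (p / 2) * phi κ τ l ^ p * (T - l) ^ (-(1 / 2 : ℝ)) ≤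
        C₂ * (jb τ ^ max (1 - ρ) 0 * (T - τ) ^ (-(1 / 2 : ℝ))) := by
    refine (integral_phi_le_of_lt hp hρ hτ hτT).trans ?_
    have h := hnear τ hτ
    simp only [neg_neg] at h
    calc jb τ ^ (-(p / 2)) * (T - τ) ^ (-(1 / 2 : ℝ)) *
          ∫ l in (0 : ℝ)..τ, jb l ^ (p / 2) * jb (τ - l) ^ (-ρ)
        ≤ jb τ ^ (-(p / 2)) * (T - τ) ^ (-(1 / 2 : ℝ)) *
            (C₂ * jb τ ^ (p / 2 + max (1 - ρ) 0)) :=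
          mul_le_mul_of_nonneg_left h
            (mul_nonneg (jb_rpow_nonneg _ _) (Real.rpow_nonneg (by linarith) _))
      _ = C₂ * (jb τ ^ max (1 - ρ) 0 * (T - τ) ^ (-(1 / 2 : ℝ))) := by
          rw [← jb_rpow_mul_jb_rpow]
          have := jb_rpow_mul_jb_rpow τ (-(p / 2)) (p / 2)
          rw [neg_add_cancel, Real.rpow_zero] at this
          linear_combination (C₂ * jb τ ^ max (1 - ρ) 0 * (T - τ) ^ (-(1 / 2 : ℝ))) * this
  have hfar' : ∫ l in τ..T, jb l ^ (p / 2) * phi κ τ l ^ p * (T - l) ^ (-(1 / 2 : ℝ)) ≤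
      C₁ * jb (T - τ) ^ (max (1 - ρ) 0 - 1 / 2) :=
    (integral_phi_le_abelIntegral hp hρ hτ hτT.le).trans (hfar _ (by linarith))
  have hA := jb_rpow_nonneg (T - τ) (max (1 - ρ) 0 - 1 / 2)
  have hB : 0 ≤ jb τ ^ max (1 - ρ) 0 * (T - τ) ^ (-(1 / 2 : ℝ)) :=
    mul_nonneg (jb_rpow_nonneg _ _) (Real.rpow_nonneg (by linarith) _)
  rw [abelIntegral, ← integral_add_adjacent_intervals (hint 0 τ) (hint τ T)]
  nlinarith

end Regions

section Duhamel

variable {a b p κ ρ s τ : ℝ}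

-- Stated through `s - τ` so that the substitution `w = s - τ` is syntactic.
lemma weighted_abelIntegral_phi_le_of_mem_Icc (hp : 0 ≤ p) (hρ0 : 0 ≤ ρ) (hρ : ρ ≤ κ * p)
    (hτ : τ ∈ Icc (s / 2) s) :
    jb τ ^ (-a) * jb (s - τ) ^ (-b) *
        abelIntegral (fun l => jb l ^ (p / 2) * phi κ τ l ^ p) (s - τ) ≤
      2 * 2 ^ |a| * 2 ^ |p / 2| * jb s ^ (-(a + p / 2)) *
        (jb (s - τ) ^ (-(b - (p + 1) / 2)) * jb (s - 2 * (s - τ)) ^ (-ρ)) := by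
  have hinner := abelIntegral_phi_le_of_le (κ := κ) hp hρ0 hρ (T := s - τ) (τ := τ)
    (by linarith [hτ.2]) (by linarith [hτ.1])
  rw [add_sub_cancel, show τ - (s - τ) = s - 2 * (s - τ) by ring] at hinner
  have hI : 0 ≤ abelIntegral (fun l => jb l ^ (p / 2) * phi κ τ l ^ p) (s - τ) :=
    abelIntegral_nonneg (by linarith [hτ.2]) fun l _ => jb_rpow_mul_phi_rpow_nonneg p κ τ l
  calc jb τ ^ (-a) * jb (s - τ) ^ (-b) *
        abelIntegral (fun l => jb l ^ (p / 2) * phi κ τ l ^ p) (s - τ)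
      ≤ 2 ^ |a| * jb s ^ (-a) * jb (s - τ) ^ (-b) *
          (2 * 2 ^ |p / 2| * jb s ^ (-(p / 2)) * jb (s - 2 * (s - τ)) ^ (-ρ) *
            jb (s - τ) ^ ((p + 1) / 2)) := by
        refine mul_le_mul (mul_le_mul_of_nonneg_right ?_ (jb_rpow_nonneg _ _)) hinner hI
          (mul_nonneg (mul_nonneg (by positivity) (jb_rpow_nonneg _ _)) (jb_rpow_nonneg _ _))
        simpa using jb_rpow_le_of_mem_Icc hτ (-a)
    _ = _ := by
        rw [show -(a + p / 2) = -a + -(p / 2) by ring,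
          show -(b - (p + 1) / 2) = -b + (p + 1) / 2 by ring,
          ← jb_rpow_mul_jb_rpow, ← jb_rpow_mul_jb_rpow]
        ring

lemma exists_weighted_abelIntegral_phi_le_of_mem_Ioo (hp : 0 ≤ p) (hρ : ρ ≤ κ * p)
    (hρ1 : ρ ≠ 1) :
    ∃ C > 0, ∀ s τ, τ ∈ Ioo 0 (s / 2) →
      jb τ ^ (-a) * jb (s - τ) ^ (-b) *
          abelIntegral (fun l => jb l ^ (p / 2) * phi κ τ l ^ p) (s - τ) ≤
        C * jb s ^ (-b) * (jb τ ^ (-a) * jb (s - 2 * τ) ^ (max (1 - ρ) 0 - 1 / 2) +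
          jb τ ^ (-(a - max (1 - ρ) 0)) * (s - 2 * τ) ^ (-(1 / 2 : ℝ))) := by
  obtain ⟨C, hC, hinner⟩ := exists_abelIntegral_phi_le_of_lt hp hρ hρ1
  refine ⟨2 ^ |b| * C, by positivity, fun s τ hτ => ?_⟩
  have h := hinner τ (s - τ) hτ.1.le (by linarith [hτ.2])
  rw [show s - τ - τ = s - 2 * τ by ring] at h
  have hb : jb (s - τ) ^ (-b) ≤ 2 ^ |b| * jb s ^ (-b) := by
    simpa using jb_rpow_le_of_mem_Icc (s := s) ⟨by linarith [hτ.2], by linarith [hτ.1]⟩ (-b)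
  calc jb τ ^ (-a) * jb (s - τ) ^ (-b) *
        abelIntegral (fun l => jb l ^ (p / 2) * phi κ τ l ^ p) (s - τ)
      ≤ jb τ ^ (-a) * (2 ^ |b| * jb s ^ (-b)) *
          (C * (jb (s - 2 * τ) ^ (max (1 - ρ) 0 - 1 / 2) +
            jb τ ^ max (1 - ρ) 0 * (s - 2 * τ) ^ (-(1 / 2 : ℝ)))) :=
        mul_le_mul (mul_le_mul_of_nonneg_left hb (jb_rpow_nonneg _ _)) h
          (abelIntegral_nonneg (by linarith [hτ.1, hτ.2]) fun l _ =>
            jb_rpow_mul_phi_rpow_nonneg p κ τ l)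
          (mul_nonneg (jb_rpow_nonneg _ _) (mul_nonneg (by positivity) (jb_rpow_nonneg _ _)))
    _ = _ := by
        rw [show -(a - max (1 - ρ) 0) = -a + max (1 - ρ) 0 by ring, ← jb_rpow_mul_jb_rpow]
        ring

lemma exists_integral_near_half_le {ω : ℝ} (ha : a < 1) (hω : 0 ≤ ω) :
    ∃ C > 0, ∀ s, 0 ≤ s →
      ∫ τ in (0 : ℝ)..s / 2, (jb τ ^ (-a) * jb (s - 2 * τ) ^ (ω - 1 / 2) +
          jb τ ^ (-(a - ω)) * (s - 2 * τ) ^ (-(1 / 2 : ℝ))) ≤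
        C * jb s ^ (1 / 2 - a + ω) := by
  obtain ⟨C₁, hC₁, h₁⟩ := exists_integral_jb_mul_jb_sub_two_mul_le (x := a)
    (y := 1 / 2 - ω) (E := 1 / 2 - a + ω) ha.ne (by linarith)
    (by rw [max_eq_left (by linarith)]; linarith) (by rw [max_eq_left (by linarith)]; linarith)
  obtain ⟨C₂, hC₂, h₂⟩ := exists_integral_jb_mul_sub_two_mul_rpow_le (β := a - ω)
    (E := 1 / 2 - a + ω) (by linarith) (by rw [max_eq_left (by linarith)]; linarith)
  refine ⟨C₁ + C₂, by positivity, fun s hs => ?_⟩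
  rw [integral_add (Continuous.intervalIntegrable (by fun_prop) _ _)
    (intervalIntegrable_mul_sub_two_mul_rpow_neg_half (continuous_jb_rpow _) _ _ _), add_mul]
  simpa only [neg_sub] using add_le_add (h₁ s hs) (h₂ s hs)

lemma exists_integral_far_half_le {x : ℝ} (hx : x < 1) (hρ1 : ρ ≠ 1) :
    ∃ C > 0, ∀ s, 0 ≤ s →
      ∫ τ in s / 2..s, jb (s - τ) ^ (-x) * jb (s - 2 * (s - τ)) ^ (-ρ) ≤
        C * jb s ^ (max (1 - ρ) 0 - x) := by
  obtain ⟨C, hC, h⟩ := exists_integral_jb_mul_jb_sub_two_mul_le (y := ρ) hx.ne hρ1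
    (by rw [max_eq_left (by linarith)]; linarith [le_max_left (1 - ρ) 0]) le_rfl
  refine ⟨C, hC, fun s hs => ?_⟩
  rw [integral_comp_sub_left (fun w => jb w ^ (-x) * jb (s - 2 * w) ^ (-ρ)), sub_self,
    show s - s / 2 = s / 2 by ring]
  exact h s hs

lemma exists_integral_weighted_abelIntegral_phi_le (ha : a < 1) (hb : b - (p + 1) / 2 < 1)
    (hp : 0 ≤ p) (hρ0 : 0 ≤ ρ) (hρ : ρ ≤ κ * p) (hρ1 : ρ ≠ 1) :
    ∃ C > 0, ∀ s, 0 ≤ s →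
      ∫ τ in (0 : ℝ)..s, jb τ ^ (-a) * jb (s - τ) ^ (-b) *
          abelIntegral (fun l => jb l ^ (p / 2) * phi κ τ l ^ p) (s - τ) ≤
        C * jb s ^ (1 / 2 - a - b + max (1 - ρ) 0) := by
  obtain ⟨C₀, hC₀, hnear⟩ :=
    exists_weighted_abelIntegral_phi_le_of_mem_Ioo (a := a) (b := b) hp hρ hρ1
  obtain ⟨C₁, hC₁, hint₁⟩ := exists_integral_near_half_le ha (le_max_right (1 - ρ) 0)
  obtain ⟨C₂, hC₂, hint₂⟩ := exists_integral_far_half_le hb hρ1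
  refine ⟨C₀ * C₁ + 2 * 2 ^ |a| * 2 ^ |p / 2| * C₂, by positivity, fun s hs => ?_⟩
  have hE₁ : jb s ^ (-b) * jb s ^ (1 / 2 - a + max (1 - ρ) 0) =
      jb s ^ (1 / 2 - a - b + max (1 - ρ) 0) := by rw [jb_rpow_mul_jb_rpow]; ring_nf
  have hE₂ : jb s ^ (-(a + p / 2)) * jb s ^ (max (1 - ρ) 0 - (b - (p + 1) / 2)) =
      jb s ^ (1 / 2 - a - b + max (1 - ρ) 0) := by rw [jb_rpow_mul_jb_rpow]; ring_nf
  calc _ ≤ _ := integral_le_add_of_le_on_Ioo_of_le_on_Ioc (by linarith) (by linarith)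
        (fun τ hτ => mul_nonneg (mul_nonneg (jb_rpow_nonneg _ _) (jb_rpow_nonneg _ _))
          (abelIntegral_nonneg (by linarith [hτ.2]) fun l _ =>
            jb_rpow_mul_phi_rpow_nonneg p κ τ l))
        (((Continuous.intervalIntegrable (by fun_prop) _ _).add
          (intervalIntegrable_mul_sub_two_mul_rpow_neg_half (continuous_jb_rpow _) _ _ _)).const_mul
            _)
        ((Continuous.intervalIntegrable (by fun_prop) _ _).const_mul _) (hnear s)
        fun τ hτ => weighted_abelIntegral_phi_le_of_mem_Icc hp hρ0 hρ ⟨hτ.1.le, hτ.2⟩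
    _ ≤ C₀ * jb s ^ (-b) * (C₁ * jb s ^ (1 / 2 - a + max (1 - ρ) 0)) +
        2 * 2 ^ |a| * 2 ^ |p / 2| * jb s ^ (-(a + p / 2)) *
          (C₂ * jb s ^ (max (1 - ρ) 0 - (b - (p + 1) / 2))) := by
      rw [intervalIntegral.integral_const_mul, intervalIntegral.integral_const_mul]
      exact add_le_add
        (mul_le_mul_of_nonneg_left (hint₁ s hs) (mul_nonneg hC₀.le (jb_rpow_nonneg _ _)))
        (mul_le_mul_of_nonneg_left (hint₂ s hs) (mul_nonneg (by positivity) (jb_rpow_nonneg _ _)))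
    _ = _ := by linear_combination C₀ * C₁ * hE₁ + 2 * 2 ^ |a| * 2 ^ |p / 2| * C₂ * hE₂

end Duhamel

lemma one_lt_p0 {N : ℝ} (hN : 1 < N) : 1 < p0 N := by
  have hsqrt : N - 3 < Real.sqrt (N ^ 2 + 10 * N - 7) := Real.lt_sqrt_of_sq_lt (by nlinarith)
  rw [p0, lt_div_iff₀ (by linarith)]
  linarith

lemma exists_ne_one_le_max_one_sub_le {r δ : ℝ} (hr : 0 ≤ r) (hδ : 0 ≤ δ)
    (hrδ : 1 - δ < r) :
    ∃ ρ, 0 ≤ ρ ∧ ρ ≤ r ∧ ρ ≠ 1 ∧ max (1 - ρ) 0 ≤ δ := by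
  rcases le_or_gt r 1 with hr1 | hr1
  · refine ⟨max (1 - δ) 0, le_max_right _ _, max_le hrδ.le hr, ?_, ?_⟩
    · exact (max_lt (by linarith) one_pos).ne
    · exact max_le (by linarith [le_max_left (1 - δ) 0]) hδ
  · exact ⟨r, hr, le_rfl, hr1.ne', by rw [max_eq_right (by linarith)]; exact hδ⟩

theorem estimate_J_gamma_general (n : ℕ) (hn : 4 ≤ n)
    (μ : ℝ) (hμ : 0 < μ) (p κ q γ : ℝ)
    (hp₁ : p0 ((n : ℝ) + μ) < p) (hp₂ : p < pFuj (((n : ℝ) + μ - 1) / 2))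
    (hκ₁ : 0 < κ) (hκ₂ : κ ≤ ((n : ℝ) + μ - 1) * p / 2 - ((n : ℝ) + μ + 1) / 2)
    (hκ₃ : κ > 2 / (p - 1) - ((n : ℝ) + μ - 1) / 2)
    (hq : q = ((n : ℝ) - 1) * p / 2 - ((n : ℝ) + 1) / 2)
    (hpμ : p < pFuj μ) (hγ : γ = 0 ∨ γ = 1 / 2) :
    ∃ C > 0, ∀ t : ℝ, 0 ≤ t → ∀ r : ℝ, 0 < r →
      (∫ τ in (0 : ℝ)..(max (t - r) 0),
          jb τ ^ (-(μ * (p - 1) / 2)) * jb (t - τ - r) ^ (-q - 1 / 2 - γ) *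
            ∫ l in (0 : ℝ)..(t - τ - r),
              jb l ^ (p / 2) * phi κ τ l ^ p *
                ((t - τ - r) - l) ^ (-(1 / 2 : ℝ))) ≤
        C * jb (t - r) ^ (-κ - γ) := by
  have hn4 : (4 : ℝ) ≤ n := by exact_mod_cast hn
  have hp : 1 < p := (one_lt_p0 (by linarith)).trans hp₁
  have hγ₁ : γ ≤ 1 / 2 := by rcases hγ with rfl | rfl <;> norm_num
  have ha : μ * (p - 1) / 2 < 1 := by
    have := (lt_div_iff₀ hμ).1 (by rw [pFuj] at hpμ; linarith : p - 1 < 2 / μ)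
    linarith
  have hb : q + 1 / 2 + γ - (p + 1) / 2 < 1 := by
    have := (lt_div_iff₀ (by linarith : (0 : ℝ) < ((n : ℝ) + μ - 1) / 2)).1
      (by rw [pFuj] at hp₂; linarith : p - 1 < 2 / (((n : ℝ) + μ - 1) / 2))
    nlinarith
  have hκp : 1 - (μ * (p - 1) / 2 + q - κ) < κ * p := by
    have := (div_lt_iff₀ (by linarith : (0 : ℝ) < p - 1)).1
      (by linarith : 2 / (p - 1) < κ + ((n : ℝ) + μ - 1) / 2)
    rw [hq]; linarith
  obtain ⟨ρ, hρ0, hρ, hρ1, hρδ⟩ := exists_ne_one_le_max_one_sub_le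
    (mul_nonneg hκ₁.le (by linarith)) (by rw [hq]; linarith) hκp
  obtain ⟨C, hC, hJ⟩ := exists_integral_weighted_abelIntegral_phi_le (b := q + 1 / 2 + γ)
    (κ := κ) ha hb (by linarith) hρ0 hρ hρ1
  refine ⟨C, hC, fun t _ r _ => ?_⟩
  rcases le_or_gt (t - r) 0 with hs | hs
  · rw [max_eq_right hs, integral_same]
    exact mul_nonneg hC.le (jb_rpow_nonneg _ _)
  · rw [max_eq_left hs.le, show -q - 1 / 2 - γ = -(q + 1 / 2 + γ) by ring]
    simp_rw [show ∀ τ, t - τ - r = t - r - τ from fun τ => by ring]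
    exact (hJ _ hs.le).trans (mul_le_mul_of_nonneg_left
      (jb_rpow_le_jb_rpow_of_exponent_le (by linarith)) hC.le)

/-- Proposition 3.9, estimate for `J_γ(t,r)`. -/
theorem estimate_J_gamma (n : ℕ) (hn : 4 ≤ n) (hne : Even n)
    (μ : ℝ) (hμ : 0 < μ) (p κ q γ : ℝ)
    (hp₁ : p0 ((n : ℝ) + μ) < p) (hp₂ : p < pFuj (((n : ℝ) + μ - 1) / 2))
    (hκ₁ : 0 < κ) (hκ₂ : κ ≤ ((n : ℝ) + μ - 1) * p / 2 - ((n : ℝ) + μ + 1) / 2)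
    (hκ₃ : κ > 2 / (p - 1) - ((n : ℝ) + μ - 1) / 2)
    (hq : q = ((n : ℝ) - 1) * p / 2 - ((n : ℝ) + 1) / 2)
    (hq₀ : -(1 / 2 : ℝ) ≤ q) (hq₁ : q ≤ ((n : ℝ) - 3) / 2)
    (hpμ : p < pFuj μ) (hγ : γ = 0 ∨ γ = 1 / 2) :
    ∃ C > 0, ∀ t : ℝ, 0 ≤ t → ∀ r : ℝ, 0 < r →
      (∫ τ in (0 : ℝ)..(max (t - r) 0),
          jb τ ^ (-(μ * (p - 1) / 2)) * jb (t - τ - r) ^ (-q - 1 / 2 - γ) *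
            ∫ l in (0 : ℝ)..(t - τ - r),
              jb l ^ (p / 2) * phi κ τ l ^ p *
                ((t - τ - r) - l) ^ (-(1 / 2 : ℝ))) ≤
        C * jb (t - r) ^ (-κ - γ) :=
  estimate_J_gamma_general n hn μ hμ p κ q γ hp₁ hp₂ hκ₁ hκ₂ hκ₃ hq hpμ hγ
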